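/- arXiv:2401.03911 — 4 statements merged into one kernel-verified Lean document; each statement's English description precedes it below -/
import Mathlib

section
/- For the equilibrium profile h_s, the coefficient m_s(ξ) := 2|h_s'(ξ)|^2 - 4 h_s(ξ) h_s''(ξ) + h_s(ξ)^2 is strictly positive for every ξ ∈ [-1,1]. -/
/-!
Multiplying numerator and denominator by `e⁻¹ / 2` gives `h_s = (cosh 1 - cosh x) / sinh 1`, so
`h_s' = -sinh x / sinh 1` and `h_s'' = -cosh x / sinh 1`. With `c = cosh x`, `C = cosh 1` and
`sinh² x = c² - 1`, the coefficient times `sinh² 1` is `2 (C² - 1) - (C - c)²`, which is positive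
because `0 ≤ C - c ≤ C - 1 < 2 (C + 1)`.
-/

noncomputable def hs : ℝ → ℝ := fun x =>
  (Real.exp 1 ^ 2 + 1) / (Real.exp 1 ^ 2 - 1) -
    (Real.exp (x + 1) + Real.exp (1 - x)) / (Real.exp 1 ^ 2 - 1)

open Real

theorem hs_eq_cosh : hs = fun x => (cosh 1 - cosh x) / sinh 1 := by
  funext x
  have he : exp 1 ^ 2 - 1 ≠ 0 := by
    have := one_lt_exp_iff.2 one_pos
    nlinarith
  simp only [hs, cosh_eq, sinh_eq, exp_add, exp_sub, exp_neg]
  field_simp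

theorem deriv_hs : deriv hs = fun x => -sinh x / sinh 1 := by
  funext x
  rw [hs_eq_cosh]
  simp [((hasDerivAt_cosh x).const_sub (cosh 1)).div_const (sinh 1) |>.deriv]

theorem deriv_deriv_hs : deriv (deriv hs) = fun x => -cosh x / sinh 1 := by
  funext x
  rw [deriv_hs]
  exact ((hasDerivAt_sinh x).neg.div_const (sinh 1)).deriv

theorem two_mul_sinh_sq_add_cosh_sub_cosh_pos {x L : ℝ} (hx : |x| ≤ |L|) (hL : L ≠ 0) :
    0 < 2 * sinh x ^ 2 + 4 * (cosh L - cosh x) * cosh x + (cosh L - cosh x) ^ 2 := by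
  have h1 := one_le_cosh x
  have h2 := cosh_le_cosh.2 hx
  have h3 := one_lt_cosh.2 hL
  rw [sinh_sq]
  nlinarith

theorem stmt_3 :
    ∀ ξ ∈ Set.Icc (-1 : ℝ) 1,
      0 < 2 * (deriv hs ξ) ^ 2 - 4 * hs ξ * deriv (deriv hs) ξ + hs ξ ^ 2 := by
  intro ξ hξ
  have hξ1 : |ξ| ≤ |1| := by
    rw [abs_one]
    exact abs_le.2 hξ
  have hsinh : 0 < sinh 1 := sinh_pos_iff.2 one_pos
  have hcoeff : 2 * (deriv hs ξ) ^ 2 - 4 * hs ξ * deriv (deriv hs) ξ + hs ξ ^ 2 =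
      (2 * sinh ξ ^ 2 + 4 * (cosh 1 - cosh ξ) * cosh ξ + (cosh 1 - cosh ξ) ^ 2) / sinh 1 ^ 2 := by
    rw [deriv_deriv_hs, deriv_hs, hs_eq_cosh]
    field_simp
    ring
  rw [hcoeff]
  exact div_pos (two_mul_sinh_sq_add_cosh_sub_cosh_pos hξ1 one_ne_zero) (pow_pos hsinh 2)
end

section
/- Hardy's inequality (supercritical case): Let p > 1 and k be real numbers with k + 1/p > 1. Then there exists a constant C = C(k,p) such that for every function g : (0,1) → ℝ that is absolutely continuous on (0,1) with the right-hand side finite, ∫₀¹ (s^{k-1} |g(s)|)^p ds ≤ C ∫₀¹ ( (s^k |g'(s)|)^p + (s^k |g(s)|)^p ) ds. -/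
/-! Pointwise, `|g s| ≤ E + ∫ₛ¹ |g'|`, where `E` is built from the averages of `|g|` and `|g'|`
over `(1/2, 1)`; there the weight `t ^ k` is bounded below, so Jensen bounds `E ^ p` by the
right-hand side. The term `∫ₛ¹ |g'|` is controlled by Hardy's inequality for the tail operator
`f ↦ ∫ₛ¹ f` with power weights, proved by Hölder's inequality with an intermediate power weight
followed by Fubini. The hypothesis `k + 1/p > 1`, i.e. `(k - 1) p + 1 > 0`, is exactly what makes
both power integrals of that argument converge. Everything is done with lower Lebesgue integrals,
so integrability only enters when converting back to Bochner integrals at the very end. -/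

open MeasureTheory Set
open scoped ENNReal
open ENNReal (ofReal)

lemma min_rpow_le_rpow {a b t k : ℝ} (ha : 0 < a) (hat : a ≤ t) (htb : t ≤ b) :
    min (a ^ k) (b ^ k) ≤ t ^ k := by
  rcases le_or_gt 0 k with hk | hk
  · exact (min_le_left _ _).trans (Real.rpow_le_rpow ha.le hat hk)
  · exact (min_le_right _ _).trans (Real.rpow_le_rpow_of_nonpos (ha.trans_le hat) htb hk.le)

lemma ofReal_rpow_mul_rpow {s : ℝ} (hs : 0 < s) (r : ℝ) {p : ℝ} (hp : 0 ≤ p) (x : ℝ≥0∞) :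
    (ofReal (s ^ r) * x) ^ p = ofReal (s ^ (r * p)) * x ^ p := by
  rw [ENNReal.mul_rpow_of_nonneg _ _ hp, ENNReal.ofReal_rpow_of_pos (Real.rpow_pos_of_pos hs r),
    ← Real.rpow_mul hs.le]

lemma lintegral_Ioo_zero_rpow {r t : ℝ} (hr : -1 < r) (ht : 0 < t) :
    ∫⁻ s in Ioo 0 t, ofReal (s ^ r) = ofReal (t ^ (r + 1) / (r + 1)) := by
  rw [← ofReal_integral_eq_lintegral_ofReal ((intervalIntegral.integrableOn_Ioo_rpow_iff ht).2 hr)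
    (ae_restrict_of_forall_mem measurableSet_Ioo fun s hs => Real.rpow_nonneg hs.1.le r),
    ← integral_Ioc_eq_integral_Ioo, ← intervalIntegral.integral_of_le ht.le,
    integral_rpow (Or.inl hr), Real.zero_rpow (by linarith), sub_zero]

lemma lintegral_Ioi_rpow_of_lt {r c : ℝ} (hr : r < -1) (hc : 0 < c) :
    ∫⁻ t in Ioi c, ofReal (t ^ r) = ofReal (-c ^ (r + 1) / (r + 1)) := by
  rw [← ofReal_integral_eq_lintegral_ofReal (integrableOn_Ioi_rpow_of_lt hr hc)
    (ae_restrict_of_forall_mem measurableSet_Ioi fun t ht => Real.rpow_nonneg (hc.trans ht).le r),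
    integral_Ioi_rpow_of_lt hr hc]

lemma lintegral_Ioo_mul_lintegral_Ioo_swap {a b : ℝ} {c F : ℝ → ℝ≥0∞} (hc : Measurable c)
    (hF : Measurable F) :
    ∫⁻ s in Ioo a b, c s * ∫⁻ t in Ioo s b, F t =
      ∫⁻ t in Ioo a b, (∫⁻ s in Ioo a t, c s) * F t := by
  set Φ : ℝ → ℝ → ℝ≥0∞ := fun s t =>
    {q : ℝ × ℝ | q.1 < q.2}.indicator (fun q => c q.1 * F q.2) (s, t)
  have hΦ : Measurable (Function.uncurry Φ) :=
    ((hc.comp measurable_fst).mul (hF.comp measurable_snd)).indicator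
      (measurableSet_lt measurable_fst measurable_snd)
  have hleft : ∀ s ∈ Ioo a b, c s * ∫⁻ t in Ioo s b, F t = ∫⁻ t in Ioo a b, Φ s t := by
    intro s hs
    have : ∀ t, Φ s t = c s * (Ioi s).indicator F t := fun t => by
      by_cases h : s < t <;> simp [Φ, h]
    simp only [this]
    rw [lintegral_const_mul _ (hF.indicator measurableSet_Ioi),
      lintegral_indicator measurableSet_Ioi,
      Measure.restrict_restrict measurableSet_Ioi, Ioi_inter_Ioo, max_eq_left hs.1.le]
  have hright : ∀ t ∈ Ioo a b, (∫⁻ s in Ioo a t, c s) * F t = ∫⁻ s in Ioo a b, Φ s t := by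
    intro t ht
    have : ∀ s, Φ s t = (Iio t).indicator c s * F t := fun s => by
      by_cases h : s < t <;> simp [Φ, h]
    simp only [this]
    rw [lintegral_mul_const _ (hc.indicator measurableSet_Iio),
      lintegral_indicator measurableSet_Iio,
      Measure.restrict_restrict measurableSet_Iio, Iio_inter_Ioo, min_eq_left ht.2.le]
  rw [setLIntegral_congr_fun measurableSet_Ioo hleft,
    setLIntegral_congr_fun measurableSet_Ioo hright]
  exact lintegral_lintegral_swap hΦ.aemeasurable

lemma rpow_lintegral_le_lintegral_weight_mul {α : Type*} [MeasurableSpace α] {μ : Measure α}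
    {p : ℝ} (hp : 1 < p) {w : α → ℝ} (hw : ∀ᵐ x ∂μ, 0 < w x) (hwm : AEMeasurable w μ)
    {f : α → ℝ≥0∞} (hf : AEMeasurable f μ) :
    (∫⁻ x, f x ∂μ) ^ p ≤
      (∫⁻ x, ofReal (w x ^ (-(p - 1)⁻¹)) ∂μ) ^ (p - 1) * ∫⁻ x, ofReal (w x) * f x ^ p ∂μ := by
  have hp0 : 0 < p := by linarith
  have hpq := Real.HolderConjugate.conjExponent hp
  have hqp : 1 / p.conjExponent * p = p - 1 := by simp only [Real.conjExponent]; field_simp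
  have hsplit : ∫⁻ x, f x ∂μ = ∫⁻ x, ((fun x => ofReal (w x ^ p⁻¹) * f x) *
      fun x => ofReal (w x ^ (-p⁻¹))) x ∂μ :=
    lintegral_congr_ae <| hw.mono fun x hx => by
      rw [Pi.mul_apply, mul_right_comm, ← ENNReal.ofReal_mul (Real.rpow_nonneg hx.le _),
        ← Real.rpow_add hx, add_neg_cancel, Real.rpow_zero, ENNReal.ofReal_one, one_mul]
  calc (∫⁻ x, f x ∂μ) ^ p
      ≤ ((∫⁻ x, (ofReal (w x ^ p⁻¹) * f x) ^ p ∂μ) ^ (1 / p) *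
          (∫⁻ x, ofReal (w x ^ (-p⁻¹)) ^ p.conjExponent ∂μ) ^ (1 / p.conjExponent)) ^ p := by
        rw [hsplit]
        gcongr
        exact ENNReal.lintegral_mul_le_Lp_mul_Lq μ hpq (by fun_prop) (by fun_prop)
    _ = _ := by
        have hweight : ∫⁻ x, ofReal (w x ^ (-p⁻¹)) ^ p.conjExponent ∂μ =
            ∫⁻ x, ofReal (w x ^ (-(p - 1)⁻¹)) ∂μ := lintegral_congr_ae <| hw.mono fun x hx => by
          dsimp only
          rw [ENNReal.ofReal_rpow_of_pos (Real.rpow_pos_of_pos hx _), ← Real.rpow_mul hx.le]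
          simp only [Real.conjExponent]
          field_simp
        have hf : ∫⁻ x, (ofReal (w x ^ p⁻¹) * f x) ^ p ∂μ = ∫⁻ x, ofReal (w x) * f x ^ p ∂μ :=
          lintegral_congr_ae <| hw.mono fun x hx => by
            dsimp only
            rw [ofReal_rpow_mul_rpow hx _ hp0.le, inv_mul_cancel₀ hp0.ne', Real.rpow_one]
        rw [ENNReal.mul_rpow_of_nonneg _ _ hp0.le, ← ENNReal.rpow_mul, ← ENNReal.rpow_mul,
          one_div_mul_cancel hp0.ne', ENNReal.rpow_one, hqp, mul_comm, hweight, hf]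

lemma rpow_setLIntegral_le_of_subset_Ioi {p e s : ℝ} (hp : 1 < p) (he : p - 1 < e) (hs : 0 < s)
    {S : Set ℝ} (hSm : MeasurableSet S) (hS : S ⊆ Ioi s) {f : ℝ → ℝ≥0∞}
    (hf : AEMeasurable f (volume.restrict S)) :
    (∫⁻ t in S, f t) ^ p ≤ ofReal (((p - 1) / (e - (p - 1))) ^ (p - 1) * s ^ (p - 1 - e)) *
      ∫⁻ t in S, ofReal (t ^ e) * f t ^ p := by
  have hp1 : p - 1 ≠ 0 := by linarith
  have hd : 0 < (e - (p - 1)) / (p - 1) := div_pos (by linarith) (by linarith)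
  set r := e * -(p - 1)⁻¹
  have hr1 : r + 1 = -((e - (p - 1)) / (p - 1)) := by simp only [r]; field_simp; ring
  refine (rpow_lintegral_le_lintegral_weight_mul hp (ae_restrict_of_forall_mem hSm fun t ht =>
    Real.rpow_pos_of_pos (hs.trans (hS ht)) e) (by fun_prop) hf).trans ?_
  gcongr
  calc (∫⁻ t in S, ofReal ((t ^ e) ^ (-(p - 1)⁻¹))) ^ (p - 1)
      = (∫⁻ t in S, ofReal (t ^ r)) ^ (p - 1) := by
        congr 1
        exact setLIntegral_congr_fun hSm fun t ht => by rw [← Real.rpow_mul (hs.trans (hS ht)).le]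
    _ ≤ (∫⁻ t in Ioi s, ofReal (t ^ r)) ^ (p - 1) := by gcongr
    _ = _ := by
        have hnn : 0 ≤ (p - 1) / (e - (p - 1)) := div_nonneg (by linarith) (by linarith)
        have hform : -s ^ (r + 1) / (r + 1) = (p - 1) / (e - (p - 1)) * s ^ (r + 1) := by
          rw [hr1]; field_simp
        rw [lintegral_Ioi_rpow_of_lt (by linarith) hs, hform,
          ENNReal.ofReal_rpow_of_nonneg (by positivity) (by linarith),
          Real.mul_rpow hnn (by positivity), ← Real.rpow_mul hs.le, hr1]
        congr 3
        field_simp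
        ring

lemma lintegral_rpow_mul_lintegral_Ioo {r : ℝ} (hr : -1 < r) {F : ℝ → ℝ≥0∞} (hF : Measurable F) :
    ∫⁻ s in Ioo 0 1, ofReal (s ^ r) * ∫⁻ t in Ioo s 1, F t =
      ∫⁻ t in Ioo 0 1, ofReal (t ^ (r + 1) / (r + 1)) * F t := by
  rw [lintegral_Ioo_mul_lintegral_Ioo_swap (by fun_prop) hF]
  exact setLIntegral_congr_fun measurableSet_Ioo fun t ht => by
    rw [lintegral_Ioo_zero_rpow hr ht.1]

theorem lintegral_tail_hardy {p a : ℝ} (hp : 1 < p) (ha : -1 < a) {f : ℝ → ℝ≥0∞}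
    (hf : AEMeasurable f (volume.restrict (Ioo 0 1))) :
    ∫⁻ s in Ioo 0 1, ofReal (s ^ a) * (∫⁻ t in Ioo s 1, f t) ^ p ≤
      ofReal ((2 * (p - 1) / (a + 1)) ^ (p - 1) * (2 / (a + 1))) *
        ∫⁻ t in Ioo 0 1, ofReal (t ^ (a + p)) * f t ^ p := by
  wlog hfm : Measurable f generalizing f
  · have hmk : ∀ s ∈ Ioo (0 : ℝ) 1, ∫⁻ t in Ioo s 1, f t = ∫⁻ t in Ioo s 1, hf.mk f t :=
      fun s hs => lintegral_congr_ae <| ae_restrict_of_ae_restrict_of_subset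
        (Ioo_subset_Ioo_left hs.1.le) hf.ae_eq_mk
    have hrhs : ∫⁻ t in Ioo 0 1, ofReal (t ^ (a + p)) * f t ^ p =
        ∫⁻ t in Ioo 0 1, ofReal (t ^ (a + p)) * hf.mk f t ^ p :=
      lintegral_congr_ae (hf.ae_eq_mk.mono fun t ht => by simp only [ht])
    rw [setLIntegral_congr_fun measurableSet_Ioo fun s hs => by rw [hmk s hs], hrhs]
    exact this hf.measurable_mk.aemeasurable hf.measurable_mk
  -- Hölder with the weight `t ^ e`: the power integrals converge iff `p - 1 < e < a + p`,
  -- and `e` is taken to be the midpoint.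
  set δ := (a + 1) / 2
  set e := p - 1 + δ
  set C := ((p - 1) / (e - (p - 1))) ^ (p - 1)
  have hδ : 0 < δ := by simp only [δ]; linarith
  have hC : 0 ≤ C := Real.rpow_nonneg (div_nonneg (by linarith) (by linarith)) _
  calc ∫⁻ s in Ioo 0 1, ofReal (s ^ a) * (∫⁻ t in Ioo s 1, f t) ^ p
      ≤ ∫⁻ s in Ioo 0 1, ofReal (s ^ a) * (ofReal (C * s ^ (p - 1 - e)) *
          ∫⁻ t in Ioo s 1, ofReal (t ^ e) * f t ^ p) :=
        setLIntegral_mono' measurableSet_Ioo fun s hs => by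
          gcongr
          exact rpow_setLIntegral_le_of_subset_Ioi hp (by simp only [e]; linarith) hs.1
            measurableSet_Ioo Ioo_subset_Ioi_self hfm.aemeasurable
    _ = ofReal C * ∫⁻ s in Ioo 0 1, ofReal (s ^ (δ - 1)) *
          ∫⁻ t in Ioo s 1, ofReal (t ^ e) * f t ^ p := by
        rw [← lintegral_const_mul' _ _ ENNReal.ofReal_ne_top]
        refine setLIntegral_congr_fun measurableSet_Ioo fun s hs => ?_
        have hexp : s ^ (δ - 1) = s ^ a * s ^ (p - 1 - e) := by
          rw [← Real.rpow_add hs.1]; simp only [e, δ]; ring_nf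
        rw [ENNReal.ofReal_mul hC, hexp, ENNReal.ofReal_mul (Real.rpow_nonneg hs.1.le _)]
        ring
    _ = ofReal C * ∫⁻ t in Ioo 0 1, ofReal δ⁻¹ * (ofReal (t ^ (a + p)) * f t ^ p) := by
        rw [lintegral_rpow_mul_lintegral_Ioo (by linarith) (by fun_prop), sub_add_cancel]
        refine congrArg _ (setLIntegral_congr_fun measurableSet_Ioo fun t ht => ?_)
        rw [div_eq_inv_mul, ENNReal.ofReal_mul (inv_nonneg.2 hδ.le), mul_assoc,
          ← mul_assoc _ _ (f t ^ p),
          ← ENNReal.ofReal_mul (Real.rpow_nonneg ht.1.le _), ← Real.rpow_add ht.1]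
        congr 4
        simp only [e, δ]; ring
    _ = _ := by
        rw [lintegral_const_mul' _ _ ENNReal.ofReal_ne_top, ← mul_assoc, ← ENNReal.ofReal_mul hC]
        congr 3
        · simp only [C, e, add_sub_cancel_left, δ, div_div_eq_mul_div, mul_comm (p - 1)]
        · exact inv_div _ _

lemma rpow_lintegral_le_lintegral_rpow {α : Type*} [MeasurableSpace α] {μ : Measure α}
    (hμ : μ univ ≤ 1) {p : ℝ} (hp : 1 < p) {f : α → ℝ≥0∞} (hf : AEMeasurable f μ) :
    (∫⁻ x, f x ∂μ) ^ p ≤ ∫⁻ x, f x ^ p ∂μ := by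
  refine (rpow_lintegral_le_lintegral_weight_mul hp (w := fun _ => 1) (ae_of_all _ fun _ => one_pos)
    aemeasurable_const hf).trans ?_
  simp only [Real.one_rpow, ENNReal.ofReal_one, one_mul, lintegral_const]
  exact mul_le_of_le_one_left' (ENNReal.rpow_le_one hμ (by linarith))

lemma rpow_setLIntegral_Ioo_abs_le {p k a b : ℝ} (hp : 1 < p) (ha : 0 < a) (hab : a ≤ b)
    (hba : b ≤ a + 1) {f : ℝ → ℝ} (hf : AEMeasurable f (volume.restrict (Ioo a b))) :
    (∫⁻ t in Ioo a b, ofReal |f t|) ^ p ≤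
      ofReal (min (a ^ k) (b ^ k))⁻¹ ^ p *
        ∫⁻ t in Ioo a b, ofReal (t ^ k * |f t|) ^ p := by
  have hm : 0 < min (a ^ k) (b ^ k) :=
    lt_min (Real.rpow_pos_of_pos ha _) (Real.rpow_pos_of_pos (ha.trans_le hab) _)
  calc (∫⁻ t in Ioo a b, ofReal |f t|) ^ p
      ≤ ∫⁻ t in Ioo a b, ofReal |f t| ^ p := by
        refine rpow_lintegral_le_lintegral_rpow ?_ hp hf.abs.ennreal_ofReal
        rw [Measure.restrict_apply_univ, Real.volume_Ioo]
        exact ENNReal.ofReal_le_one.2 (by linarith)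
    _ ≤ ∫⁻ t in Ioo a b,
          (ofReal (min (a ^ k) (b ^ k))⁻¹ * ofReal (t ^ k * |f t|)) ^ p := by
        refine setLIntegral_mono' measurableSet_Ioo fun t ht => ?_
        rw [← ENNReal.ofReal_mul (inv_nonneg.2 hm.le)]
        gcongr
        exact (le_inv_mul_iff₀ hm).2 (mul_le_mul_of_nonneg_right
          (min_rpow_le_rpow ha ht.1.le ht.2.le) (abs_nonneg _))
    _ = _ := by
        simp_rw [ENNReal.mul_rpow_of_nonneg _ _ (zero_le_one.trans hp.le)]
        exact lintegral_const_mul' _ _ (by finiteness)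

lemma aemeasurable_of_hasDerivAt {g g' : ℝ → ℝ} {S : Set ℝ} (hS : MeasurableSet S)
    (hg : ∀ x ∈ S, HasDerivAt g (g' x) x) : AEMeasurable g' (volume.restrict S) :=
  (measurable_deriv g).aemeasurable.congr
    (ae_restrict_of_forall_mem hS fun x hx => (hg x hx).deriv)

lemma ofReal_abs_sub_le_lintegral {g g' : ℝ → ℝ} {s t : ℝ} (hst : s ≤ t)
    (hg : ∀ x ∈ Icc s t, HasDerivAt g (g' x) x) :
    ofReal |g t - g s| ≤ ∫⁻ x in Ioo s t, ofReal |g' x| := by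
  by_cases hfin : ∫⁻ x in Ioo s t, ofReal |g' x| = ∞
  · simp [hfin]
  have hint : IntegrableOn g' (Ioo s t) :=
    ⟨(aemeasurable_of_hasDerivAt measurableSet_Ioo fun x hx =>
        hg x (Ioo_subset_Icc_self hx)).aestronglyMeasurable,
      by simpa [HasFiniteIntegral, Real.enorm_eq_ofReal_abs] using lt_top_iff_ne_top.2 hfin⟩
  rw [← intervalIntegral.integral_eq_sub_of_hasDerivAt
      (fun x hx => hg x (by rwa [uIcc_of_le hst] at hx))
      ((intervalIntegrable_iff_integrableOn_Ioo_of_le hst).2 hint),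
    intervalIntegral.integral_of_le hst, integral_Ioc_eq_integral_Ioo, ← Real.enorm_eq_ofReal_abs]
  simpa [Real.enorm_eq_ofReal_abs] using enorm_integral_le_lintegral_enorm g'

lemma ofReal_abs_le_add_lintegral {g g' : ℝ → ℝ} (hg : ∀ x ∈ Ioo 0 1, HasDerivAt g (g' x) x)
    {s t : ℝ} (hs : s ∈ Ioo 0 1) (ht : t ∈ Ioo 0 1) :
    ofReal |g s| ≤ ofReal |g t| +
      ((∫⁻ x in Ioo t 1, ofReal |g' x|) + ∫⁻ x in Ioo s 1, ofReal |g' x|) := by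
  have hsub : ∀ {x y}, x ∈ Ioo (0 : ℝ) 1 → y ∈ Ioo (0 : ℝ) 1 → x ≤ y →
      ofReal |g y - g x| ≤ ∫⁻ z in Ioo x 1, ofReal |g' z| := fun hx hy hxy =>
    (ofReal_abs_sub_le_lintegral hxy fun z hz =>
      hg z ⟨hx.1.trans_le hz.1, hz.2.trans_lt hy.2⟩).trans
        (lintegral_mono_set (Ioo_subset_Ioo_right hy.2.le))
  calc ofReal |g s| ≤ ofReal (|g t| + |g s - g t|) :=
        ENNReal.ofReal_le_ofReal (by linarith [abs_sub_abs_le_abs_sub (g s) (g t)])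
    _ ≤ ofReal |g t| + ofReal |g s - g t| := ENNReal.ofReal_add_le
    _ ≤ _ := by
        gcongr
        rcases le_total s t with hst | hts
        · exact (abs_sub_comm (g s) (g t) ▸ hsub hs ht hst).trans le_add_self
        · exact (hsub ht hs hts).trans le_self_add

lemma ofReal_abs_le_setLIntegral_add_lintegral {g g' : ℝ → ℝ}
    (hg : ∀ x ∈ Ioo 0 1, HasDerivAt g (g' x) x) {a b s : ℝ} (ha : 0 ≤ a) (hab : a < b) (hb : b ≤ 1)
    (hs : s ∈ Ioo 0 1) :
    ofReal |g s| ≤ ofReal (b - a)⁻¹ * (∫⁻ t in Ioo a b, ofReal |g t|) +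
      ((∫⁻ x in Ioo a 1, ofReal |g' x|) + ∫⁻ x in Ioo s 1, ofReal |g' x|) := by
  set c := (∫⁻ x in Ioo a 1, ofReal |g' x|) + ∫⁻ x in Ioo s 1, ofReal |g' x|
  have hvol : volume (Ioo a b) = ofReal (b - a) := Real.volume_Ioo
  have hmean : ofReal |g s| * ofReal (b - a) ≤
      (∫⁻ t in Ioo a b, ofReal |g t|) + c * ofReal (b - a) :=
    calc ofReal |g s| * ofReal (b - a) = ∫⁻ _ in Ioo a b, ofReal |g s| := by
          rw [setLIntegral_const, hvol]
      _ ≤ ∫⁻ t in Ioo a b, (ofReal |g t| + c) :=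
          setLIntegral_mono' measurableSet_Ioo fun t ht =>
            (ofReal_abs_le_add_lintegral hg hs ⟨ha.trans_lt ht.1, ht.2.trans_le hb⟩).trans <|
              add_le_add le_rfl <|
                add_le_add (lintegral_mono_set (Ioo_subset_Ioo_left ht.1.le)) le_rfl
      _ = _ := by rw [lintegral_add_right _ measurable_const, setLIntegral_const, hvol]
  have hinv : ofReal (b - a)⁻¹ * ofReal (b - a) = 1 := by
    rw [← ENNReal.ofReal_mul (by simp [hab.le]), inv_mul_cancel₀ (by linarith), ENNReal.ofReal_one]
  calc ofReal |g s| = ofReal (b - a)⁻¹ * (ofReal |g s| * ofReal (b - a)) := by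
        rw [mul_left_comm, hinv, mul_one]
    _ ≤ ofReal (b - a)⁻¹ * ((∫⁻ t in Ioo a b, ofReal |g t|) + c * ofReal (b - a)) := by
        gcongr
    _ = _ := by rw [mul_add, mul_left_comm, hinv, mul_one]

lemma rpow_lintegral_abs_add_lintegral_abs_deriv_le {p k : ℝ} (hp : 1 < p) {g g' : ℝ → ℝ}
    (hg : ∀ x ∈ Ioo 0 1, HasDerivAt g (g' x) x) :
    (ofReal 2 * (∫⁻ t in Ioo 2⁻¹ 1, ofReal |g t|) +
        ∫⁻ t in Ioo 2⁻¹ 1, ofReal |g' t|) ^ p ≤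
      2 ^ (p - 1) * (ofReal 2 ^ p + 1) * ofReal (min ((2⁻¹ : ℝ) ^ k) 1)⁻¹ ^ p *
        ((∫⁻ s in Ioo 0 1, ofReal (s ^ k * |g' s|) ^ p) +
          ∫⁻ s in Ioo 0 1, ofReal (s ^ k * |g s|) ^ p) := by
  set m := ofReal (min ((2⁻¹ : ℝ) ^ k) 1)⁻¹ ^ p
  set R := (∫⁻ s in Ioo 0 1, ofReal (s ^ k * |g' s|) ^ p) +
    ∫⁻ s in Ioo 0 1, ofReal (s ^ k * |g s|) ^ p
  have hsub : Ioo (2⁻¹ : ℝ) 1 ⊆ Ioo 0 1 := Ioo_subset_Ioo_left (by norm_num)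
  have hJensen : ∀ {f : ℝ → ℝ}, AEMeasurable f (volume.restrict (Ioo 2⁻¹ 1)) →
      (∫⁻ t in Ioo 2⁻¹ 1, ofReal |f t|) ^ p ≤
        m * ∫⁻ s in Ioo 0 1, ofReal (s ^ k * |f s|) ^ p := fun hf =>
    (Real.one_rpow k ▸
      rpow_setLIntegral_Ioo_abs_le hp (by norm_num) (by norm_num) (by norm_num) hf).trans
        (by gcongr)
  calc _ ≤ 2 ^ (p - 1) * ((ofReal 2 * ∫⁻ t in Ioo 2⁻¹ 1, ofReal |g t|) ^ p +
        (∫⁻ t in Ioo 2⁻¹ 1, ofReal |g' t|) ^ p) := ENNReal.rpow_add_le_mul_rpow_add_rpow _ _ hp.le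
    _ ≤ 2 ^ (p - 1) * (ofReal 2 ^ p * (m * R) + m * R) := by
        rw [ENNReal.mul_rpow_of_nonneg _ _ (by linarith)]
        gcongr
        · exact (hJensen (ContinuousOn.aemeasurable
            (fun x hx => (hg x (hsub hx)).continuousAt.continuousWithinAt) measurableSet_Ioo)).trans
            (by gcongr; exact le_add_self)
        · exact (hJensen <| aemeasurable_of_hasDerivAt measurableSet_Ioo fun x hx =>
            hg x (hsub hx)).trans (by gcongr; exact le_self_add)
    _ = _ := by ring

lemma lintegral_mul_add_rpow_le {α : Type*} [MeasurableSpace α] {μ : Measure α} {p : ℝ}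
    (hp : 1 ≤ p) {w : α → ℝ≥0∞} (hw : AEMeasurable w μ) (E : ℝ≥0∞) (J : α → ℝ≥0∞) :
    ∫⁻ x, w x * (E + J x) ^ p ∂μ ≤
      2 ^ (p - 1) * (E ^ p * ∫⁻ x, w x ∂μ + ∫⁻ x, w x * J x ^ p ∂μ) :=
  calc ∫⁻ x, w x * (E + J x) ^ p ∂μ
      ≤ ∫⁻ x, 2 ^ (p - 1) * (E ^ p * w x + w x * J x ^ p) ∂μ := lintegral_mono fun x => by
        grw [ENNReal.rpow_add_le_mul_rpow_add_rpow _ _ hp]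
        exact le_of_eq (by ring)
    _ = _ := by
        rw [lintegral_const_mul' _ _ (by finiteness), lintegral_add_left' (hw.const_mul _),
          lintegral_const_mul'' _ hw]

noncomputable def hardyConst (p k : ℝ) : ℝ≥0∞ :=
  2 ^ (p - 1) * (2 ^ (p - 1) * (ofReal 2 ^ p + 1) * ofReal (min ((2⁻¹ : ℝ) ^ k) 1)⁻¹ ^ p *
      ofReal ((k - 1) * p + 1)⁻¹ +
    ofReal ((2 * (p - 1) / ((k - 1) * p + 1)) ^ (p - 1) * (2 / ((k - 1) * p + 1))))

lemma lintegral_rpow_mul_abs_rpow_le {p k : ℝ} (hp : 1 < p) (hα : 0 < (k - 1) * p + 1)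
    {g g' : ℝ → ℝ} (hg : ∀ s ∈ Ioo 0 1, HasDerivAt g (g' s) s) :
    ∫⁻ s in Ioo 0 1, ofReal (s ^ ((k - 1) * p)) * ofReal |g s| ^ p ≤
      hardyConst p k * ((∫⁻ s in Ioo 0 1, ofReal (s ^ k * |g' s|) ^ p) +
        ∫⁻ s in Ioo 0 1, ofReal (s ^ k * |g s|) ^ p) := by
  set CE := 2 ^ (p - 1) * (ofReal 2 ^ p + 1) * ofReal (min ((2⁻¹ : ℝ) ^ k) 1)⁻¹ ^ p
  set CH := (2 * (p - 1) / ((k - 1) * p + 1)) ^ (p - 1) * (2 / ((k - 1) * p + 1))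
  set J := fun s => ∫⁻ x in Ioo s 1, ofReal |g' x|
  set R := (∫⁻ s in Ioo 0 1, ofReal (s ^ k * |g' s|) ^ p) +
    ∫⁻ s in Ioo 0 1, ofReal (s ^ k * |g s|) ^ p
  set E := ofReal 2 * (∫⁻ t in Ioo 2⁻¹ 1, ofReal |g t|) + J 2⁻¹
  have hE : E ^ p ≤ CE * R := rpow_lintegral_abs_add_lintegral_abs_deriv_le hp hg
  have hJ : ∫⁻ s in Ioo 0 1, ofReal (s ^ ((k - 1) * p)) * J s ^ p ≤
      ofReal CH * ∫⁻ t in Ioo 0 1, ofReal (t ^ k * |g' t|) ^ p :=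
    (lintegral_tail_hardy hp (by linarith)
      (aemeasurable_of_hasDerivAt measurableSet_Ioo hg).abs.ennreal_ofReal).trans_eq <|
      congrArg _ <| setLIntegral_congr_fun measurableSet_Ioo fun t ht => by
        rw [ENNReal.ofReal_mul (Real.rpow_nonneg ht.1.le _),
          ofReal_rpow_mul_rpow ht.1 _ (by linarith), show (k - 1) * p + p = k * p by ring]
  have hw : ∫⁻ s in Ioo 0 1, ofReal (s ^ ((k - 1) * p)) = ofReal ((k - 1) * p + 1)⁻¹ := by
    rw [lintegral_Ioo_zero_rpow (by linarith) one_pos, Real.one_rpow, one_div]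
  calc ∫⁻ s in Ioo 0 1, ofReal (s ^ ((k - 1) * p)) * ofReal |g s| ^ p
      ≤ ∫⁻ s in Ioo 0 1, ofReal (s ^ ((k - 1) * p)) * (E + J s) ^ p :=
        setLIntegral_mono' measurableSet_Ioo fun s hs => by
          have := ofReal_abs_le_setLIntegral_add_lintegral hg (a := 2⁻¹) (b := 1)
            (by norm_num) (by norm_num) le_rfl hs
          rw [show ((1 : ℝ) - 2⁻¹)⁻¹ = 2 by norm_num] at this
          gcongr
          exact this.trans_eq (add_assoc _ _ _).symm
    _ ≤ 2 ^ (p - 1) * (E ^ p * ofReal ((k - 1) * p + 1)⁻¹ +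
          ∫⁻ s in Ioo 0 1, ofReal (s ^ ((k - 1) * p)) * J s ^ p) :=
        (lintegral_mul_add_rpow_le hp.le (by fun_prop) _ _).trans_eq (by rw [hw])
    _ ≤ 2 ^ (p - 1) * (CE * R * ofReal ((k - 1) * p + 1)⁻¹ + ofReal CH * R) := by
        gcongr
        exact hJ.trans (by gcongr; exact le_self_add)
    _ = _ := by rw [hardyConst]; ring

theorem lintegral_hardy {p k : ℝ} (hp : 1 < p) (hα : 0 < (k - 1) * p + 1) :
    ∃ C : ℝ≥0∞, C ≠ ∞ ∧ ∀ g g' : ℝ → ℝ, (∀ s ∈ Ioo 0 1, HasDerivAt g (g' s) s) →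
      ∫⁻ s in Ioo 0 1, ofReal ((s ^ (k - 1) * |g s|) ^ p) ≤
        C * ∫⁻ s in Ioo 0 1, ofReal ((s ^ k * |g' s|) ^ p + (s ^ k * |g s|) ^ p) := by
  have hp0 : 0 ≤ p := by linarith
  refine ⟨hardyConst p k, by rw [hardyConst]; finiteness, fun g g' hg => ?_⟩
  calc ∫⁻ s in Ioo 0 1, ofReal ((s ^ (k - 1) * |g s|) ^ p)
      = ∫⁻ s in Ioo 0 1, ofReal (s ^ ((k - 1) * p)) * ofReal |g s| ^ p :=
        setLIntegral_congr_fun measurableSet_Ioo fun s hs => by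
          rw [← ENNReal.ofReal_rpow_of_nonneg (by have := hs.1; positivity) hp0,
            ENNReal.ofReal_mul (Real.rpow_nonneg hs.1.le _), ofReal_rpow_mul_rpow hs.1 _ hp0]
    _ ≤ _ := lintegral_rpow_mul_abs_rpow_le hp hα hg
    _ ≤ _ := by
        gcongr
        refine (le_lintegral_add _ _).trans_eq
          (setLIntegral_congr_fun measurableSet_Ioo fun s hs => ?_)
        have := hs.1
        rw [ENNReal.ofReal_add (by positivity) (by positivity),
          ENNReal.ofReal_rpow_of_nonneg (by positivity) hp0,
          ENNReal.ofReal_rpow_of_nonneg (by positivity) hp0]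

lemma integral_le_toReal_mul_integral_of_lintegral_le {α : Type*} [MeasurableSpace α]
    {μ : Measure α} {f g : α → ℝ} {C : ℝ≥0∞} (hC : C ≠ ∞) (hf : 0 ≤ᵐ[μ] f)
    (hfm : AEStronglyMeasurable f μ) (hg : Integrable g μ) (hg0 : 0 ≤ᵐ[μ] g)
    (h : ∫⁻ x, ofReal (f x) ∂μ ≤ C * ∫⁻ x, ofReal (g x) ∂μ) :
    ∫ x, f x ∂μ ≤ C.toReal * ∫ x, g x ∂μ := by
  rw [← ofReal_integral_eq_lintegral_ofReal hg hg0] at h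
  rw [integral_eq_lintegral_of_nonneg_ae hf hfm,
    ← ENNReal.toReal_ofReal (integral_nonneg_of_ae hg0), ← ENNReal.toReal_mul]
  exact ENNReal.toReal_mono (by finiteness) h

theorem stmt_5 (p k : ℝ) (hp : 1 < p) (hk : k + 1 / p > 1) :
    ∃ C > (0 : ℝ), ∀ g g' : ℝ → ℝ,
      (∀ s ∈ Ioo (0 : ℝ) 1, HasDerivAt g (g' s) s) →
      IntegrableOn (fun s => (s ^ k * |g' s|) ^ p + (s ^ k * |g s|) ^ p)
        (Ioo (0 : ℝ) 1) →
      ∫ s in Ioo (0 : ℝ) 1, (s ^ (k - 1) * |g s|) ^ p ≤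
        C * ∫ s in Ioo (0 : ℝ) 1,
          ((s ^ k * |g' s|) ^ p + (s ^ k * |g s|) ^ p) := by
  have hα : 0 < (k - 1) * p + 1 := by
    have : (k - 1) * p + 1 = (k + 1 / p - 1) * p := by field_simp; ring
    rw [this]; exact mul_pos (by linarith) (by linarith)
  obtain ⟨C, hC, hH⟩ := lintegral_hardy hp hα
  refine ⟨C.toReal + 1, by positivity, fun g g' hg hint => ?_⟩
  have hgm : AEMeasurable g (volume.restrict (Ioo 0 1)) :=
    ContinuousOn.aemeasurable (fun x hx => (hg x hx).continuousAt.continuousWithinAt)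
      measurableSet_Ioo
  have hnn : 0 ≤ᵐ[volume.restrict (Ioo 0 1)] fun s => (s ^ k * |g' s|) ^ p + (s ^ k * |g s|) ^ p :=
    ae_restrict_of_forall_mem measurableSet_Ioo fun s hs => by have := hs.1; positivity
  calc ∫ s in Ioo (0 : ℝ) 1, (s ^ (k - 1) * |g s|) ^ p
      ≤ C.toReal * ∫ s in Ioo (0 : ℝ) 1, ((s ^ k * |g' s|) ^ p + (s ^ k * |g s|) ^ p) :=
        integral_le_toReal_mul_integral_of_lintegral_le hC
          (ae_restrict_of_forall_mem measurableSet_Ioo fun s hs => by have := hs.1; positivity)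
          (((measurable_id.pow_const _).aemeasurable.mul hgm.abs).pow_const p).aestronglyMeasurable
          hint hnn (hH g g' hg)
    _ ≤ _ := by
        gcongr
        · exact integral_nonneg_of_ae hnn
        · linarith
end

section
/- Weighted Poincaré inequality with degenerate weight: There is a constant C > 0 such that for every C¹ function g on [-1,1] satisfying ∫_{-1}^{1} h_s(ξ) g(ξ) dξ = 0, one has ∫_{-1}^{1} h_s(ξ) |g(ξ)|² dξ ≤ C ∫_{-1}^{1} h_s(ξ) |g'(ξ)|² dξ. -/
open Set Real intervalIntegral
open MeasureTheory (volume ae_restrict_mem)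

lemma hs_eq_cosh_s7 (x : ℝ) :
    hs x = (exp 1 ^ 2 + 1 - 2 * exp 1 * cosh x) / (exp 1 ^ 2 - 1) := by
  have hsum : exp (x + 1) + exp (1 - x) = 2 * exp 1 * cosh x := by
    rw [cosh_eq, exp_add, sub_eq_neg_add, exp_add]
    ring
  simp only [hs]
  rw [hsum, sub_div]

lemma hs_le_hs_of_abs_le {x t : ℝ} (h : |t| ≤ |x|) : hs x ≤ hs t := by
  have hden : 0 ≤ exp 1 ^ 2 - 1 := by
    nlinarith [add_one_le_exp (1 : ℝ)]
  rw [hs_eq_cosh_s7, hs_eq_cosh_s7]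
  gcongr
  exact cosh_le_cosh.2 h

lemma hs_one : hs 1 = 0 := by
  simp only [hs]
  rw [sub_self, exp_zero, exp_add]
  ring

lemma hs_nonneg {x : ℝ} (hx : x ∈ Icc (-1 : ℝ) 1) : 0 ≤ hs x :=
  hs_one ▸ hs_le_hs_of_abs_le (by rwa [abs_one, abs_le])

lemma continuous_hs : Continuous hs := by
  unfold hs
  fun_prop

section IntervalIntegral

variable {a b : ℝ} {w f : ℝ → ℝ}

lemma integral_mul_sub_sq (hw : IntervalIntegrable w volume a b)
    (hwf : IntervalIntegrable (fun x => w x * f x) volume a b)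
    (hwf2 : IntervalIntegrable (fun x => w x * f x ^ 2) volume a b) (c : ℝ) :
    ∫ x in a..b, w x * (f x - c) ^ 2 =
      (∫ x in a..b, w x * f x ^ 2) - 2 * c * (∫ x in a..b, w x * f x) +
        c ^ 2 * ∫ x in a..b, w x := by
  have hexpand : (fun x => w x * (f x - c) ^ 2) =
      fun x => (w x * f x ^ 2 - 2 * c * (w x * f x)) + c ^ 2 * w x := by
    ext x
    ring
  rw [hexpand, integral_add (hwf2.sub (hwf.const_mul _)) (hw.const_mul _),
    integral_sub hwf2 (hwf.const_mul _), integral_const_mul, integral_const_mul]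

lemma sq_integral_le_mul_integral_sq (hab : a ≤ b) (hf : IntervalIntegrable f volume a b)
    (hf2 : IntervalIntegrable (fun x => f x ^ 2) volume a b) :
    (∫ x in a..b, f x) ^ 2 ≤ (b - a) * ∫ x in a..b, f x ^ 2 := by
  have hquad : ∀ c : ℝ,
      0 ≤ (b - a) * (c * c) + (-2 * ∫ x in a..b, f x) * c + ∫ x in a..b, f x ^ 2 := by
    intro c
    have hid := integral_mul_sub_sq (w := fun _ => 1) intervalIntegrable_const
      (by simpa using hf) (by simpa using hf2) c
    simp only [one_mul, integral_const, smul_eq_mul] at hid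
    have hnonneg : 0 ≤ ∫ x in a..b, (f x - c) ^ 2 :=
      integral_nonneg hab fun x _ => sq_nonneg _
    linarith
  have hdiscr := discrim_le_zero hquad
  rw [discrim] at hdiscr
  linarith

lemma integral_mul_sq_le_integral_mul_sub_sq (hw : IntervalIntegrable w volume a b)
    (hwf : IntervalIntegrable (fun x => w x * f x) volume a b)
    (hwf2 : IntervalIntegrable (fun x => w x * f x ^ 2) volume a b)
    (hw0 : 0 ≤ ∫ x in a..b, w x) (hmean : ∫ x in a..b, w x * f x = 0) (c : ℝ) :
    ∫ x in a..b, w x * f x ^ 2 ≤ ∫ x in a..b, w x * (f x - c) ^ 2 := by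
  rw [integral_mul_sub_sq hw hwf hwf2, hmean]
  nlinarith [mul_nonneg (sq_nonneg c) hw0]

lemma mul_sq_sub_le_integral {f' : ℝ → ℝ} {c : ℝ} (hab : a ≤ b) (hf : ContinuousOn f (Icc a b))
    (hderiv : ∀ x ∈ Ioo a b, HasDerivAt f (f' x) x) (hf' : ContinuousOn f' (Icc a b))
    (hw : ContinuousOn w (Icc a b)) (hc : 0 ≤ c) (hcw : ∀ x ∈ Icc a b, c ≤ w x) :
    c * (f b - f a) ^ 2 ≤ (b - a) * ∫ x in a..b, w x * f' x ^ 2 := by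
  have hf'2 : IntervalIntegrable (fun x => f' x ^ 2) volume a b :=
    (hf'.pow 2).intervalIntegrable_of_Icc hab
  rw [← integral_eq_sub_of_hasDerivAt_of_le hab hf hderiv (hf'.intervalIntegrable_of_Icc hab)]
  calc c * (∫ x in a..b, f' x) ^ 2
      ≤ c * ((b - a) * ∫ x in a..b, f' x ^ 2) := by
        gcongr
        exact sq_integral_le_mul_integral_sq hab (hf'.intervalIntegrable_of_Icc hab) hf'2
    _ = (b - a) * ∫ x in a..b, c * f' x ^ 2 := by
        rw [integral_const_mul]
        ring
    _ ≤ (b - a) * ∫ x in a..b, w x * f' x ^ 2 := by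
        gcongr
        exact integral_mono_on hab (hf'2.const_mul c)
          ((hw.mul (hf'.pow 2)).intervalIntegrable_of_Icc hab)
          fun x hx => mul_le_mul_of_nonneg_right (hcw x hx) (sq_nonneg _)

end IntervalIntegral

section Poincare

variable {g φ : ℝ → ℝ} (hg : ContinuousOn g (Icc (-1) 1)) (hφ : ContinuousOn φ (Icc (-1) 1))
  (hderiv : ∀ x ∈ Ioo (-1 : ℝ) 1, HasDerivAt g (φ x) x)
include hg hφ hderiv

lemma hs_mul_sq_sub_le_of_subinterval {a b p : ℝ} (ha : -1 ≤ a) (hab : a ≤ b) (hb : b ≤ 1)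
    (hlen : b - a ≤ 1) (hp : p ∈ Icc (-1 : ℝ) 1) (hpt : ∀ t ∈ Icc a b, hs p ≤ hs t) :
    hs p * (g b - g a) ^ 2 ≤ ∫ t in (-1 : ℝ)..1, hs t * φ t ^ 2 := by
  have hsub : Icc a b ⊆ Icc (-1) 1 := Icc_subset_Icc ha hb
  have hweighted : 0 ≤ ∫ t in a..b, hs t * φ t ^ 2 :=
    integral_nonneg hab fun t ht => mul_nonneg (hs_nonneg (hsub ht)) (sq_nonneg _)
  calc hs p * (g b - g a) ^ 2
      ≤ (b - a) * ∫ t in a..b, hs t * φ t ^ 2 :=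
        mul_sq_sub_le_integral hab (hg.mono hsub)
          (fun t ht => hderiv t ⟨ha.trans_lt ht.1, ht.2.trans_le hb⟩) (hφ.mono hsub)
          continuous_hs.continuousOn (hs_nonneg hp) hpt
    _ ≤ ∫ t in a..b, hs t * φ t ^ 2 := mul_le_of_le_one_left hweighted hlen
    _ ≤ ∫ t in (-1 : ℝ)..1, hs t * φ t ^ 2 := by
        refine integral_mono_interval ha hab hb ?_
          ((continuous_hs.continuousOn.mul (hφ.pow 2)).intervalIntegrable_of_Icc (by norm_num))
        filter_upwards [ae_restrict_mem measurableSet_Ioc] with t ht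
        exact mul_nonneg (hs_nonneg (Ioc_subset_Icc_self ht)) (sq_nonneg _)

lemma hs_mul_sq_sub_le {x : ℝ} (hx : x ∈ Icc (-1 : ℝ) 1) :
    hs x * (g x - g 0) ^ 2 ≤ ∫ t in (-1 : ℝ)..1, hs t * φ t ^ 2 := by
  rcases le_total x 0 with hx0 | hx0
  · rw [← neg_sub, neg_sq]
    refine hs_mul_sq_sub_le_of_subinterval hg hφ hderiv hx.1 hx0 zero_le_one (by linarith [hx.1])
      hx fun t ht => hs_le_hs_of_abs_le ?_
    rw [abs_of_nonpos ht.2, abs_of_nonpos hx0]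
    linarith [ht.1]
  · refine hs_mul_sq_sub_le_of_subinterval hg hφ hderiv (by norm_num) hx0 hx.2 (by linarith [hx.2])
      hx fun t ht => hs_le_hs_of_abs_le ?_
    rw [abs_of_nonneg ht.1, abs_of_nonneg hx0]
    exact ht.2

lemma integral_hs_mul_sq_le (hmean : ∫ x in (-1 : ℝ)..1, hs x * g x = 0) :
    ∫ x in (-1 : ℝ)..1, hs x * g x ^ 2 ≤ 2 * ∫ t in (-1 : ℝ)..1, hs t * φ t ^ 2 := by
  have hint : ∀ {F : ℝ → ℝ}, ContinuousOn F (Icc (-1) 1) →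
      IntervalIntegrable (fun x => hs x * F x) volume (-1) 1 :=
    fun hF => (continuous_hs.continuousOn.mul hF).intervalIntegrable_of_Icc (by norm_num)
  calc ∫ x in (-1 : ℝ)..1, hs x * g x ^ 2
      ≤ ∫ x in (-1 : ℝ)..1, hs x * (g x - g 0) ^ 2 :=
        integral_mul_sq_le_integral_mul_sub_sq (continuous_hs.intervalIntegrable _ _) (hint hg)
          (hint (hg.pow 2)) (integral_nonneg (by norm_num) fun x hx => hs_nonneg hx) hmean _
    _ ≤ ∫ _ in (-1 : ℝ)..1, ∫ t in (-1 : ℝ)..1, hs t * φ t ^ 2 :=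
        integral_mono_on (by norm_num) (hint ((hg.sub continuousOn_const).pow 2))
          intervalIntegrable_const fun x hx => hs_mul_sq_sub_le hg hφ hderiv hx
    _ = 2 * ∫ t in (-1 : ℝ)..1, hs t * φ t ^ 2 := by
        norm_num [integral_const]

end Poincare

theorem stmt_7 :
    ∃ C > (0 : ℝ), ∀ g : ℝ → ℝ, ContDiffOn ℝ 1 g (Set.Icc (-1 : ℝ) 1) →
      (∫ ξ in (-1 : ℝ)..1, hs ξ * g ξ) = 0 →
      ∫ ξ in (-1 : ℝ)..1, hs ξ * (g ξ) ^ 2 ≤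
        C * ∫ ξ in (-1 : ℝ)..1, hs ξ * (deriv g ξ) ^ 2 := by
  refine ⟨2, two_pos, fun g hg hmean => ?_⟩
  have hderiv : ∀ x ∈ Ioo (-1 : ℝ) 1, HasDerivAt g (derivWithin g (Icc (-1) 1) x) x :=
    fun x hx => (hg.differentiableOn one_ne_zero x (Ioo_subset_Icc_self hx)).hasDerivWithinAt
      |>.hasDerivAt (Icc_mem_nhds hx.1 hx.2)
  have hderiv_eq : ∫ ξ in (-1 : ℝ)..1, hs ξ * deriv g ξ ^ 2 =
      ∫ ξ in (-1 : ℝ)..1, hs ξ * derivWithin g (Icc (-1) 1) ξ ^ 2 :=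
    integral_congr_Ioo_of_le (by norm_num) fun x hx => by
      rw [derivWithin_of_mem_nhds (Icc_mem_nhds hx.1 hx.2)]
  rw [hderiv_eq]
  exact integral_hs_mul_sq_le hg.continuousOn
    (hg.continuousOn_derivWithin (uniqueDiffOn_Icc (by norm_num)) le_rfl) hderiv hmean
end

section
/- Conservation of momentum with constant contact angle: if (h,u,a,b) is a smooth solution of the conservative momentum equation ∂_t(hu) + ∂_x(hu²) + ∂_x[h² - 2h ∂_{xx}h + |∂_x h|²] = 2∂_x(h ∂_x u) on a(t) < x < b(t), with h(a(t),t) = h(b(t),t) = 0, ∂_x h(a(t),t) = α, ∂_x h(b(t),t) = -α, ∂_x u vanishing at the endpoints, and ȧ = u(a,·), ḃ = u(b,·), then t ↦ ∫_{a(t)}^{b(t)} h u dx is constant. -/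
open Set

lemma pderiv_fst_smooth {F : ℝ → ℝ → ℝ} (hF : ContDiff ℝ (⊤ : ℕ∞) fun p : ℝ × ℝ => F p.1 p.2) :
    ContDiff ℝ (⊤ : ℕ∞) fun p : ℝ × ℝ => deriv (fun y => F y p.2) p.1 := by
  have h1 : ContDiff ℝ (⊤ : ℕ∞) fun p : ℝ × ℝ => fderiv ℝ (fun y => F y p.2) p.1 :=
    ContDiff.fderiv (f := fun (p : ℝ × ℝ) (y : ℝ) => F y p.2) (g := fun p : ℝ × ℝ => p.1)
      (hF.comp (contDiff_snd.prodMk (contDiff_fst.snd))) contDiff_fst (by simp)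
  exact h1.clm_apply contDiff_const

lemma pderiv_snd_smooth {F : ℝ → ℝ → ℝ} (hF : ContDiff ℝ (⊤ : ℕ∞) fun p : ℝ × ℝ => F p.1 p.2) :
    ContDiff ℝ (⊤ : ℕ∞) fun p : ℝ × ℝ => deriv (fun τ => F p.1 τ) p.2 := by
  have h1 : ContDiff ℝ (⊤ : ℕ∞) fun p : ℝ × ℝ => fderiv ℝ (fun τ => F p.1 τ) p.2 :=
    ContDiff.fderiv (f := fun (p : ℝ × ℝ) (τ : ℝ) => F p.1 τ) (g := fun p : ℝ × ℝ => p.2)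
      (hF.comp ((contDiff_fst.fst).prodMk contDiff_snd)) contDiff_snd (by simp)
  exact h1.clm_apply contDiff_const

lemma slice_fst_smooth {F : ℝ → ℝ → ℝ} (hF : ContDiff ℝ (⊤ : ℕ∞) fun p : ℝ × ℝ => F p.1 p.2) (t : ℝ) :
    ContDiff ℝ (⊤ : ℕ∞) fun y => F y t :=
  hF.comp (contDiff_id.prodMk contDiff_const)

lemma slice_snd_smooth {F : ℝ → ℝ → ℝ} (hF : ContDiff ℝ (⊤ : ℕ∞) fun p : ℝ × ℝ => F p.1 p.2) (x : ℝ) :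
    ContDiff ℝ (⊤ : ℕ∞) fun τ => F x τ :=
  hF.comp (contDiff_const.prodMk contDiff_id)

open Set intervalIntegral MeasureTheory

/-- Derivative of `t ↦ ∫_{c t₀}^{c t} f x t dx` at `t₀` is `c' t₀ * f (c t₀) t₀`. -/
lemma hasDerivAt_moving {f ft : ℝ → ℝ → ℝ}
    (hfc : Continuous fun p : ℝ × ℝ => f p.1 p.2)
    (hft : ∀ x t, HasDerivAt (fun τ => f x τ) (ft x t) t)
    (hftc : Continuous fun p : ℝ × ℝ => ft p.1 p.2)
    {c : ℝ → ℝ} {c' t₀ : ℝ} (hc : HasDerivAt c c' t₀) :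
    HasDerivAt (fun t => ∫ x in c t₀..c t, f x t) (c' * f (c t₀) t₀) t₀ := by
  -- bound M for |ft| on compact box
  obtain ⟨M, hM⟩ := (IsCompact.exists_bound_of_continuousOn
    ((isCompact_Icc (a := c t₀ - 1) (b := c t₀ + 1)).prod
      (isCompact_Icc (a := t₀ - 1) (b := t₀ + 1))) hftc.continuousOn)
  have hM0 : 0 ≤ M := le_trans (norm_nonneg _) (hM (c t₀, t₀) (by constructor <;>
    constructor <;> simp <;> linarith))
  -- split B = B₁ + R
  have hint : ∀ (s r t : ℝ), IntervalIntegrable (fun x => f x t) volume s r := fun s r t =>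
    (hfc.comp (continuous_id.prodMk continuous_const)).intervalIntegrable s r
  have hsplit : (fun t => ∫ x in c t₀..c t, f x t) =
      (fun t => ∫ x in c t₀..c t, f x t₀) + fun t => ∫ x in c t₀..c t, (f x t - f x t₀) := by
    funext t
    simp only [Pi.add_apply, ← integral_add (hint _ _ _) ((hint _ _ t).sub (hint _ _ t₀))]
    congr 1; funext x; ring
  rw [hsplit]
  have hB₁ : HasDerivAt (fun t => ∫ x in c t₀..c t, f x t₀) (c' * f (c t₀) t₀) t₀ := by
    have h1 : HasDerivAt (fun s => ∫ x in c t₀..s, f x t₀) (f (c t₀) t₀) (c t₀) :=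
      ((hfc.comp (continuous_id.prodMk continuous_const)).integral_hasStrictDerivAt
        (c t₀) (c t₀)).hasDerivAt
    simpa [mul_comm, Function.comp_def] using h1.comp t₀ hc
  have hR : HasDerivAt (fun t => ∫ x in c t₀..c t, (f x t - f x t₀)) 0 t₀ := by
    rw [hasDerivAt_iff_isLittleO]
    simp only [intervalIntegral.integral_same, sub_zero, smul_zero, sub_zero]
    rw [Asymptotics.isLittleO_iff]
    intro ε hε
    -- eventually |c t - c t₀| ≤ min 1 (ε/(M+1)) and |t - t₀| ≤ 1
    have hcc : ContinuousAt c t₀ := hc.continuousAt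
    have h1 : ∀ᶠ t in nhds t₀, |c t - c t₀| ≤ min 1 (ε / (M + 1)) := by
      have : ∀ᶠ t in nhds t₀, c t ∈ Metric.ball (c t₀) (min 1 (ε / (M + 1))) :=
        hcc (Metric.ball_mem_nhds _ (lt_min one_pos (by positivity)))
      filter_upwards [this] with t ht using le_of_lt (by simpa [Real.dist_eq] using ht)
    have h2 : ∀ᶠ t in nhds t₀, |t - t₀| ≤ 1 := by
      have : ∀ᶠ t in nhds t₀, t ∈ Metric.closedBall t₀ 1 :=
        Filter.eventually_of_mem (Metric.closedBall_mem_nhds _ one_pos) (fun _ h => h)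
      filter_upwards [this] with t ht using by simpa [Real.dist_eq] using ht
    filter_upwards [h1, h2] with t hct htt
    -- bound the integrand by M * |t - t₀|
    have key : ∀ x ∈ Set.uIoc (c t₀) (c t), ‖f x t - f x t₀‖ ≤ M * |t - t₀| := by
      intro x hx
      have hxmem : x ∈ Icc (c t₀ - 1) (c t₀ + 1) := by
        have := Set.uIoc_subset_uIcc hx
        rcases Set.mem_uIcc.1 this with ⟨h1', h2'⟩ | ⟨h1', h2'⟩ <;>
          constructor <;> cases abs_le.1 (le_trans hct (min_le_left _ _)) <;> linarith
      have hmvt := Convex.norm_image_sub_le_of_norm_hasDerivWithin_le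
        (f := fun τ => f x τ) (f' := fun τ => ft x τ) (s := Icc (t₀ - 1) (t₀ + 1))
        (x := t₀) (y := t)
        (fun τ _ => (hft x τ).hasDerivWithinAt)
        (fun τ hτ => hM (x, τ) ⟨hxmem, hτ⟩) (convex_Icc _ _)
        (Set.mem_Icc.2 ⟨by linarith, by linarith⟩)
        (Set.mem_Icc.2 (by cases abs_le.1 htt; constructor <;> linarith))
      simpa [Real.norm_eq_abs] using hmvt
    calc ‖∫ x in c t₀..c t, (f x t - f x t₀)‖
        ≤ M * |t - t₀| * |c t - c t₀| := intervalIntegral.norm_integral_le_of_norm_le_const key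
      _ ≤ M * |t - t₀| * (ε / (M + 1)) := by
          apply mul_le_mul_of_nonneg_left (le_trans hct (min_le_right _ _)) (by positivity)
      _ ≤ ε * ‖t - t₀‖ := by
          rw [Real.norm_eq_abs]
          rw [div_eq_mul_inv]
          have h3 : M * |t - t₀| * (ε * (M + 1)⁻¹) = (M * (M+1)⁻¹) * (ε * |t - t₀|) := by ring
          rw [h3]
          have h4 : M * (M+1)⁻¹ ≤ 1 := by
            rw [mul_inv_le_iff₀ (by linarith)]; linarith
          exact mul_le_of_le_one_left (by positivity) h4
  simpa using hB₁.add hR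

lemma hasDerivAt_param_fixed {f ft : ℝ → ℝ → ℝ}
    (hfc : Continuous fun p : ℝ × ℝ => f p.1 p.2)
    (hft : ∀ x t, HasDerivAt (fun τ => f x τ) (ft x t) t)
    (hftc : Continuous fun p : ℝ × ℝ => ft p.1 p.2)
    (p q t₀ : ℝ) :
    HasDerivAt (fun t => ∫ x in p..q, f x t) (∫ x in p..q, ft x t₀) t₀ := by
  obtain ⟨M, hM⟩ := (IsCompact.exists_bound_of_continuousOn
    ((isCompact_uIcc (a := p) (b := q)).prod
      (isCompact_Icc (a := t₀ - 1) (b := t₀ + 1))) hftc.continuousOn)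
  have cont_slice : ∀ t : ℝ, Continuous fun x => f x t := fun t =>
    hfc.comp (continuous_id.prodMk continuous_const)
  have cont_slice' : ∀ t : ℝ, Continuous fun x => ft x t := fun t =>
    hftc.comp (continuous_id.prodMk continuous_const)
  refine (intervalIntegral.hasDerivAt_integral_of_dominated_loc_of_deriv_le
    (F := fun t x => f x t) (F' := fun t x => ft x t) (bound := fun _ => M)
    (s := Metric.ball t₀ 1) (Metric.ball_mem_nhds _ one_pos) ?_ ?_ ?_ ?_ ?_ ?_).2
  · exact Filter.Eventually.of_forall fun t => ((cont_slice t).aestronglyMeasurable).restrict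
  · exact (cont_slice t₀).intervalIntegrable _ _
  · exact ((cont_slice' t₀).aestronglyMeasurable).restrict
  · refine Filter.Eventually.of_forall fun x hx => fun t htb => hM (x, t)
      ⟨uIoc_subset_uIcc hx, ?_⟩
    have := Metric.mem_ball.1 htb
    rw [Real.dist_eq] at this
    cases abs_le.1 this.le; exact Set.mem_Icc.2 (by constructor <;> linarith)
  · exact intervalIntegrable_const
  · exact Filter.Eventually.of_forall fun x _ => fun t _ => hft x t

/-- full moving-endpoint parametric derivative -/
lemma hasDerivAt_param {f ft : ℝ → ℝ → ℝ}
    (hfc : Continuous fun p : ℝ × ℝ => f p.1 p.2)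
    (hft : ∀ x t, HasDerivAt (fun τ => f x τ) (ft x t) t)
    (hftc : Continuous fun p : ℝ × ℝ => ft p.1 p.2)
    {a b : ℝ → ℝ} {a' b' t₀ : ℝ} (ha : HasDerivAt a a' t₀) (hb : HasDerivAt b b' t₀) :
    HasDerivAt (fun t => ∫ x in a t..b t, f x t)
      ((∫ x in a t₀..b t₀, ft x t₀) + b' * f (b t₀) t₀ - a' * f (a t₀) t₀) t₀ := by
  have hint : ∀ (s r t : ℝ), IntervalIntegrable (fun x => f x t) volume s r := fun s r t =>
    (hfc.comp (continuous_id.prodMk continuous_const)).intervalIntegrable s r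
  have hsplit : (fun t => ∫ x in a t..b t, f x t) =
      fun t => (∫ x in a t₀..b t₀, f x t) + (∫ x in b t₀..b t, f x t)
        - (∫ x in a t₀..a t, f x t) := by
    funext t
    have e1 : (∫ x in a t₀..b t₀, f x t) + (∫ x in b t₀..b t, f x t)
        = ∫ x in a t₀..b t, f x t :=
      intervalIntegral.integral_add_adjacent_intervals (hint _ _ _) (hint _ _ _)
    have e2 : (∫ x in a t₀..a t, f x t) + (∫ x in a t..b t, f x t)
        = ∫ x in a t₀..b t, f x t :=
      intervalIntegral.integral_add_adjacent_intervals (hint _ _ _) (hint _ _ _)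
    linarith
  rw [hsplit]
  have hA := hasDerivAt_param_fixed hfc hft hftc (a t₀) (b t₀) t₀
  have hB := hasDerivAt_moving hfc hft hftc hb
  have hC := hasDerivAt_moving hfc hft hftc ha
  exact (hA.add hB).sub hC
noncomputable def mom (h u : ℝ → ℝ → ℝ) (x t : ℝ) : ℝ := h x t * u x t

noncomputable def momT (h u : ℝ → ℝ → ℝ) (x t : ℝ) : ℝ := deriv (fun τ => mom h u x τ) t

noncomputable def flux (h u : ℝ → ℝ → ℝ) (y t : ℝ) : ℝ :=
  2 * (h y t * deriv (fun z => u z t) y) - h y t * (u y t) ^ 2 -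
    ((h y t) ^ 2 - 2 * h y t * deriv (deriv fun z => h z t) y +
      (deriv (fun z => h z t) y) ^ 2)

noncomputable def fluxX (h u : ℝ → ℝ → ℝ) (x t : ℝ) : ℝ := deriv (fun y => flux h u y t) x

theorem stmt_14 (h u : ℝ → ℝ → ℝ) (a b : ℝ → ℝ) (α : ℝ) (hα : 0 < α)
    (hh : ContDiff ℝ (⊤ : ℕ∞) fun p : ℝ × ℝ => h p.1 p.2)
    (hu : ContDiff ℝ (⊤ : ℕ∞) fun p : ℝ × ℝ => u p.1 p.2)
    (hab : ∀ t, a t < b t)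
    (ha : ∀ t, HasDerivAt a (u (a t) t) t)
    (hb : ∀ t, HasDerivAt b (u (b t) t) t)
    (hbc0a : ∀ t, h (a t) t = 0) (hbc0b : ∀ t, h (b t) t = 0)
    (hbc1a : ∀ t, deriv (fun y => h y t) (a t) = α)
    (hbc1b : ∀ t, deriv (fun y => h y t) (b t) = -α)
    (hbc2a : ∀ t, deriv (fun y => u y t) (a t) = 0)
    (hbc2b : ∀ t, deriv (fun y => u y t) (b t) = 0)
    (hpde : ∀ t, ∀ x ∈ Set.Ioo (a t) (b t),
      deriv (fun τ => h x τ * u x τ) t +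
        deriv (fun y => h y t * (u y t) ^ 2) x +
        deriv (fun y => (h y t) ^ 2 -
          2 * h y t * deriv (deriv fun z => h z t) y +
          (deriv (fun z => h z t) y) ^ 2) x =
      2 * deriv (fun y => h y t * deriv (fun z => u z t) y) x) :
    ∀ t₁ t₂ : ℝ,
      (∫ x in a t₁..b t₁, h x t₁ * u x t₁) =
        ∫ x in a t₂..b t₂, h x t₂ * u x t₂ := by
  -- smoothness infrastructure
  have hfC : ContDiff ℝ (⊤ : ℕ∞) fun p : ℝ × ℝ => mom h u p.1 p.2 := hh.mul hu
  have hftC : ContDiff ℝ (⊤ : ℕ∞) fun p : ℝ × ℝ => momT h u p.1 p.2 :=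
    pderiv_snd_smooth (F := mom h u) hfC
  have hfc : Continuous fun p : ℝ × ℝ => mom h u p.1 p.2 := hfC.continuous
  have hftc : Continuous fun p : ℝ × ℝ => momT h u p.1 p.2 := hftC.continuous
  have hft : ∀ x t, HasDerivAt (fun τ => mom h u x τ) (momT h u x t) t := fun x t =>
    ((slice_snd_smooth (F := mom h u) hfC x).differentiable (by simp) t).hasDerivAt
  have hxC : ContDiff ℝ (⊤ : ℕ∞) fun p : ℝ × ℝ => deriv (fun y => h y p.2) p.1 :=
    pderiv_fst_smooth hh
  have hxxC : ContDiff ℝ (⊤ : ℕ∞) fun p : ℝ × ℝ => deriv (fun y => deriv (fun z => h z p.2) y) p.1 :=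
    pderiv_fst_smooth (F := fun x t => deriv (fun y => h y t) x) hxC
  have uxC : ContDiff ℝ (⊤ : ℕ∞) fun p : ℝ × ℝ => deriv (fun y => u y p.2) p.1 :=
    pderiv_fst_smooth hu
  have hΦC : ContDiff ℝ (⊤ : ℕ∞) fun p : ℝ × ℝ => flux h u p.1 p.2 := by
    refine ContDiff.sub (ContDiff.sub ?_ ?_) ?_
    · exact contDiff_const.mul (hh.mul uxC)
    · exact hh.mul (hu.pow 2)
    · exact ((hh.pow 2).sub ((contDiff_const.mul hh).mul hxxC)).add (hxC.pow 2)
  have hΦxC : ContDiff ℝ (⊤ : ℕ∞) fun p : ℝ × ℝ => fluxX h u p.1 p.2 :=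
    pderiv_fst_smooth (F := flux h u) hΦC
  -- interior identity extended to the closed interval, and the integral of momT vanishes
  have hzero : ∀ t, (∫ x in a t..b t, momT h u x t) = 0 := by
    intro t
    have dux : ContDiff ℝ (⊤ : ℕ∞) fun y => deriv (fun z => u z t) y :=
      slice_fst_smooth (F := fun x s => deriv (fun z => u z s) x) uxC t
    have dhx : ContDiff ℝ (⊤ : ℕ∞) fun y => deriv (fun z => h z t) y :=
      slice_fst_smooth (F := fun x s => deriv (fun z => h z s) x) hxC t
    have dhxx : ContDiff ℝ (⊤ : ℕ∞) fun y => deriv (deriv fun z => h z t) y :=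
      slice_fst_smooth (F := fun x s => deriv (fun y => deriv (fun z => h z s) y) x) hxxC t
    have hht : ContDiff ℝ (⊤ : ℕ∞) fun y => h y t := slice_fst_smooth hh t
    have hut : ContDiff ℝ (⊤ : ℕ∞) fun y => u y t := slice_fst_smooth hu t
    have heqIoo : Set.EqOn (fun x => momT h u x t) (fun x => fluxX h u x t)
        (Set.Ioo (a t) (b t)) := by
      intro x hx
      have d1 : DifferentiableAt ℝ (fun y => h y t * (u y t) ^ 2) x :=
        ((hht.mul (hut.pow 2)).differentiable (by simp)) x
      have d3 : DifferentiableAt ℝ (fun y => h y t * deriv (fun z => u z t) y) x :=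
        ((hht.mul dux).differentiable (by simp)) x
      have d2 : DifferentiableAt ℝ (fun y => (h y t) ^ 2 -
          2 * h y t * deriv (deriv fun z => h z t) y + (deriv (fun z => h z t) y) ^ 2) x :=
        ((((hht.pow 2).sub ((contDiff_const.mul hht).mul dhxx)).add
          (dhx.pow 2)).differentiable (by simp)) x
      have e : fluxX h u x t =
          2 * deriv (fun y => h y t * deriv (fun z => u z t) y) x -
          deriv (fun y => h y t * (u y t) ^ 2) x -
          deriv (fun y => (h y t) ^ 2 -
            2 * h y t * deriv (deriv fun z => h z t) y +
            (deriv (fun z => h z t) y) ^ 2) x := by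
        simp only [fluxX, flux]
        rw [deriv_fun_sub (f := fun y => 2 * (h y t * deriv (fun z => u z t) y) - h y t * u y t ^ 2)
            ((d3.const_mul 2).sub d1) d2, deriv_fun_sub (d3.const_mul 2) d1,
          deriv_const_mul 2 d3]
      have hp := hpde t x hx
      have hm : momT h u x t = deriv (fun τ => h x τ * u x τ) t := rfl
      simp only []
      rw [hm, e]
      linarith
    have heq : Set.EqOn (fun x => momT h u x t) (fun x => fluxX h u x t)
        (Set.uIcc (a t) (b t)) := by
      rw [Set.uIcc_of_le (hab t).le]
      have hcl := heqIoo.closure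
        (hftc.comp (continuous_id.prodMk continuous_const))
        ((hΦxC.continuous).comp (continuous_id.prodMk continuous_const))
      rwa [closure_Ioo (hab t).ne] at hcl
    have h1 : (∫ x in a t..b t, momT h u x t) = ∫ x in a t..b t, fluxX h u x t :=
      intervalIntegral.integral_congr heq
    have h2 : (∫ x in a t..b t, fluxX h u x t) = flux h u (b t) t - flux h u (a t) t := by
      have hdiff : ∀ x ∈ Set.uIcc (a t) (b t), DifferentiableAt ℝ (fun y => flux h u y t) x :=
        fun x _ => (((slice_fst_smooth (F := flux h u) hΦC t)).differentiable (by simp)) x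
      have hint : IntervalIntegrable (deriv fun y => flux h u y t) MeasureTheory.volume
          (a t) (b t) :=
        ((hΦxC.continuous).comp (continuous_id.prodMk continuous_const)).intervalIntegrable _ _
      exact intervalIntegral.integral_deriv_eq_sub hdiff hint
    have vb : flux h u (b t) t = -α ^ 2 := by
      simp only [flux]
      rw [hbc0b t, hbc1b t, hbc2b t]; ring
    have va : flux h u (a t) t = -α ^ 2 := by
      simp only [flux]
      rw [hbc0a t, hbc1a t, hbc2a t]; ring
    rw [h1, h2, va, vb]; ring
  -- the momentum integral has zero derivative everywhere
  have key : ∀ t₀ : ℝ, HasDerivAt (fun t => ∫ x in a t..b t, h x t * u x t) 0 t₀ := by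
    intro t₀
    have H := hasDerivAt_param (f := mom h u) (ft := momT h u) hfc hft hftc (ha t₀) (hb t₀)
    have hval : (∫ x in a t₀..b t₀, momT h u x t₀) + u (b t₀) t₀ * mom h u (b t₀) t₀ -
        u (a t₀) t₀ * mom h u (a t₀) t₀ = 0 := by
      rw [hzero t₀]
      simp [mom, hbc0a t₀, hbc0b t₀]
    rw [hval] at H
    exact H
  intro t₁ t₂
  exact is_const_of_deriv_eq_zero (fun t => (key t).differentiableAt)
    (fun t => (key t).deriv) t₁ t₂
end
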